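/- arXiv:2209.04516 — 6 statements merged into one kernel-verified Lean document; each statement's English description precedes it below -/
import Mathlib

section
/- Let G ∈ ℝ^{d×d} be a symmetric matrix with all entries non-negative (in fact bounded below by m/d² > 0). Define 𝖢 on the cone 𝒞 = {Gx : x ∈ ℝ_{≥0}^d} by 𝖢(Gx) = (1/2) Gx·x. Then 𝖢 is non-decreasing: if y, y' ∈ 𝒞 with y' − y ∈ ℝ_{≥0}^d, then 𝖢(y) ≤ 𝖢(y'). -/
namespace Matrix

variable {n R : Type*} [Fintype n]

theorem IsSymm.mulVec_dotProduct_comm [CommSemiring R] {G : Matrix n n R} (hG : G.IsSymm)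
    (x y : n → R) : G *ᵥ x ⬝ᵥ y = G *ᵥ y ⬝ᵥ x := by
  rw [dotProduct_comm, dotProduct_mulVec, ← mulVec_transpose, hG.eq]

theorem IsSymm.mulVec_dotProduct_self_le_of_mulVec_le [CommSemiring R] [PartialOrder R]
    [IsOrderedRing R] {G : Matrix n n R} (hG : G.IsSymm) {x x' : n → R} (hx : 0 ≤ x)
    (hx' : 0 ≤ x') (hle : G *ᵥ x ≤ G *ᵥ x') : G *ᵥ x ⬝ᵥ x ≤ G *ᵥ x' ⬝ᵥ x' :=
  calc G *ᵥ x ⬝ᵥ x ≤ G *ᵥ x' ⬝ᵥ x := dotProduct_le_dotProduct_of_nonneg_right hle hx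
    _ = G *ᵥ x ⬝ᵥ x' := hG.mulVec_dotProduct_comm x' x
    _ ≤ G *ᵥ x' ⬝ᵥ x' := dotProduct_le_dotProduct_of_nonneg_right hle hx'

end Matrix

theorem nonlinearity_nondecreasing_general (d : ℕ)
    (G : Matrix (Fin d) (Fin d) ℝ) (hsym : G.IsSymm)
    (x x' : Fin d → ℝ) (hx : ∀ i, 0 ≤ x i) (hx' : ∀ i, 0 ≤ x' i)
    (hle : ∀ i, G.mulVec x i ≤ G.mulVec x' i) :
    (1 / 2) * ∑ i, G.mulVec x i * x i ≤ (1 / 2) * ∑ i, G.mulVec x' i * x' i :=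
  mul_le_mul_of_nonneg_left (hsym.mulVec_dotProduct_self_le_of_mulVec_le hx hx' hle) (by norm_num)

/-- The non-linearity 𝖢(Gx) = (1/2) Gx·x is non-decreasing on the cone
𝒞 = {Gx : x ∈ ℝ_{≥0}^d} with respect to the componentwise order, where G is a
symmetric matrix with entries bounded below by m/d² > 0. -/
theorem nonlinearity_nondecreasing (d : ℕ) (m : ℝ) (hm : 0 < m)
    (G : Matrix (Fin d) (Fin d) ℝ) (hsym : G.IsSymm)
    (hG : ∀ k k', m / (d : ℝ) ^ 2 ≤ G k k')
    (x x' : Fin d → ℝ) (hx : ∀ i, 0 ≤ x i) (hx' : ∀ i, 0 ≤ x' i)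
    (hle : ∀ i, G.mulVec x i ≤ G.mulVec x' i) :
    (1 / 2) * ∑ i, G.mulVec x i * x i ≤ (1 / 2) * ∑ i, G.mulVec x' i * x' i :=
  nonlinearity_nondecreasing_general d G hsym x x' hx hx' hle
end

section
/- Let G ∈ ℝ^{d×d} be symmetric with entries satisfying m/d² ≤ G_{kk'} ≤ M/d² for some 0 < m ≤ M. For the cone 𝒞 = {Gx : x ∈ ℝ_{≥0}^d} and the non-linearity 𝖢(Gx) = (1/2)Gx·x, one has for all y, y' ∈ 𝒞: |𝖢(y) − 𝖢(y')| ≤ (1/m)(‖y‖_{1,*} + ‖y'‖_{1,*}) ‖y − y'‖_{1,*}, where ‖y‖_{1,*} = max_k d|y_k| is the normalized ℓ^{1,*} norm. -/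
/-!
For symmetric `G` the difference of the quadratic forms factors as
`½ Gx·x − ½ Gx'·x' = ½ (Gx − Gx')·(x + x')`, so by ℓ¹/ℓ^{1,*} duality it is at most
`½ ‖x + x'‖₁ ‖Gx − Gx'‖_{1,*}`. On the nonnegative cone a single row of `G` already
controls the ℓ¹ norm: `m ‖x + x'‖₁ ≤ ‖G(x + x')‖_{1,*} ≤ ‖Gx‖_{1,*} + ‖Gx'‖_{1,*}`.
-/

/-- The normalized ℓ^{1,*} norm on ℝ^d: ‖y‖_{1,*} = max_k d|y_k|. -/
noncomputable def normStar (d : ℕ) (y : Fin d → ℝ) : ℝ := ⨆ k, (d : ℝ) * |y k|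

open Matrix

noncomputable def normOne (d : ℕ) (x : Fin d → ℝ) : ℝ := (∑ k, |x k|) / d

section NormalizedNorms

variable {d : ℕ}

lemma le_normStar (y : Fin d → ℝ) (k : Fin d) : (d : ℝ) * |y k| ≤ normStar d y :=
  le_ciSup (f := fun k => (d : ℝ) * |y k|) (Set.finite_range _).bddAbove k

lemma normStar_nonneg (y : Fin d → ℝ) : 0 ≤ normStar d y :=
  Real.iSup_nonneg fun _ => by positivity

lemma normStar_add_le (y y' : Fin d → ℝ) : normStar d (y + y') ≤ normStar d y + normStar d y' :=
  Real.iSup_le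
    (fun k => calc
      (d : ℝ) * |(y + y') k| ≤ d * |y k| + d * |y' k| := by
        rw [Pi.add_apply, ← mul_add]
        gcongr
        exact abs_add_le _ _
      _ ≤ normStar d y + normStar d y' := add_le_add (le_normStar y k) (le_normStar y' k))
    (add_nonneg (normStar_nonneg y) (normStar_nonneg y'))

lemma abs_dotProduct_le_normOne_mul_normStar (x y : Fin d → ℝ) :
    |x ⬝ᵥ y| ≤ normOne d x * normStar d y :=
  calc |x ⬝ᵥ y| ≤ ∑ k, |x k| / d * (d * |y k|) := by
        refine (Finset.abs_sum_le_sum_abs _ _).trans (Finset.sum_le_sum fun k _ => ?_)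
        have hd : (d : ℝ) ≠ 0 := Nat.cast_ne_zero.2 (Fin.pos k).ne'
        rw [abs_mul]
        exact le_of_eq (by field_simp)
    _ ≤ ∑ k, |x k| / d * normStar d y := by
        gcongr with k
        exact le_normStar y k
    _ = normOne d x * normStar d y := by rw [← Finset.sum_mul, ← Finset.sum_div, normOne]

lemma mul_normOne_le_normStar_mulVec {m : ℝ} (G : Matrix (Fin d) (Fin d) ℝ)
    (hG : ∀ k k', m / (d : ℝ) ^ 2 ≤ G k k') {x : Fin d → ℝ} (hx : ∀ i, 0 ≤ x i) :
    m * normOne d x ≤ normStar d (G *ᵥ x) := by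
  rcases Nat.eq_zero_or_pos d with rfl | hd
  · simpa [normOne] using normStar_nonneg (G *ᵥ x)
  set k₀ : Fin d := ⟨0, hd⟩
  have hrow : m / (d : ℝ) ^ 2 * ∑ j, x j ≤ (G *ᵥ x) k₀ := by
    rw [mulVec, dotProduct, Finset.mul_sum]
    exact Finset.sum_le_sum fun j _ => mul_le_mul_of_nonneg_right (hG k₀ j) (hx j)
  have hd' : (d : ℝ) ≠ 0 := by positivity
  calc m * normOne d x = d * (m / (d : ℝ) ^ 2 * ∑ j, x j) := by
        rw [normOne, Finset.sum_congr rfl fun k _ => abs_of_nonneg (hx k)]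
        field_simp
    _ ≤ d * |(G *ᵥ x) k₀| := by gcongr; exact hrow.trans (le_abs_self _)
    _ ≤ normStar d (G *ᵥ x) := le_normStar _ k₀

end NormalizedNorms

namespace Matrix.IsSymm

variable {α n : Type*} [Fintype n] {A : Matrix n n α}

lemma mulVec_dotProduct_comm_s2 [CommSemiring α] (hA : A.IsSymm) (x y : n → α) :
    A *ᵥ x ⬝ᵥ y = A *ᵥ y ⬝ᵥ x := by
  rw [dotProduct_comm, dotProduct_mulVec, ← hA.eq, vecMul_transpose, hA.eq]

lemma mulVec_dotProduct_sub [CommRing α] (hA : A.IsSymm) (x x' : n → α) :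
    A *ᵥ x ⬝ᵥ x - A *ᵥ x' ⬝ᵥ x' = (x + x') ⬝ᵥ (A *ᵥ x - A *ᵥ x') := by
  rw [add_dotProduct, dotProduct_sub, dotProduct_sub, dotProduct_comm x, dotProduct_comm x,
    dotProduct_comm x', dotProduct_comm x', hA.mulVec_dotProduct_comm_s2 x' x]
  ring

end Matrix.IsSymm

theorem nonlinearity_locally_lipschitz_general (d : ℕ) (m : ℝ)
    (hm : 0 < m)
    (G : Matrix (Fin d) (Fin d) ℝ) (hsym : G.IsSymm)
    (hlow : ∀ k k', m / (d : ℝ) ^ 2 ≤ G k k')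
    (x x' : Fin d → ℝ) (hx : ∀ i, 0 ≤ x i) (hx' : ∀ i, 0 ≤ x' i) :
    |(1 / 2) * ∑ i, G.mulVec x i * x i - (1 / 2) * ∑ i, G.mulVec x' i * x' i| ≤
      (1 / m) * (normStar d (G.mulVec x) + normStar d (G.mulVec x')) *
        normStar d (G.mulVec x - G.mulVec x') := by
  set A := normStar d (G *ᵥ x) + normStar d (G *ᵥ x')
  set N := normStar d (G *ᵥ x - G *ᵥ x')
  have hsum : normOne d (x + x') ≤ A / m := by
    rw [le_div_iff₀ hm, mul_comm]
    calc m * normOne d (x + x') ≤ normStar d (G *ᵥ (x + x')) :=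
          mul_normOne_le_normStar_mulVec G hlow fun i => add_nonneg (hx i) (hx' i)
      _ ≤ A := by rw [mulVec_add]; exact normStar_add_le _ _
  have hA : 0 ≤ A := add_nonneg (normStar_nonneg _) (normStar_nonneg _)
  have hN : 0 ≤ N := normStar_nonneg _
  calc |(1 / 2) * (G *ᵥ x ⬝ᵥ x) - (1 / 2) * (G *ᵥ x' ⬝ᵥ x')|
        = (1 / 2) * |(x + x') ⬝ᵥ (G *ᵥ x - G *ᵥ x')| := by
          rw [← mul_sub, hsym.mulVec_dotProduct_sub, abs_mul, abs_of_pos one_half_pos]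
    _ ≤ (1 / 2) * (A / m * N) := by
          gcongr
          exact (abs_dotProduct_le_normOne_mul_normStar _ _).trans
            (mul_le_mul_of_nonneg_right hsum hN)
    _ = (1 / 2) * ((1 / m) * A * N) := by ring
    _ ≤ (1 / m) * A * N := by
          linarith [mul_nonneg (mul_nonneg (one_div_pos.2 hm).le hA) hN]

/-- Local Lipschitz continuity of the non-linearity 𝖢(Gx) = (1/2) Gx·x on the cone
𝒞 = {Gx : x ∈ ℝ_{≥0}^d}, with respect to the normalized ℓ^{1,*} norm. -/
theorem nonlinearity_locally_lipschitz (d : ℕ) (hd : 0 < d) (m M : ℝ)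
    (hm : 0 < m) (hmM : m ≤ M)
    (G : Matrix (Fin d) (Fin d) ℝ) (hsym : G.IsSymm)
    (hlow : ∀ k k', m / (d : ℝ) ^ 2 ≤ G k k')
    (hup : ∀ k k', G k k' ≤ M / (d : ℝ) ^ 2)
    (x x' : Fin d → ℝ) (hx : ∀ i, 0 ≤ x i) (hx' : ∀ i, 0 ≤ x' i) :
    |(1 / 2) * ∑ i, G.mulVec x i * x i - (1 / 2) * ∑ i, G.mulVec x' i * x' i| ≤
      (1 / m) * (normStar d (G.mulVec x) + normStar d (G.mulVec x')) *
        normStar d (G.mulVec x - G.mulVec x') :=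
  nonlinearity_locally_lipschitz_general d m hm G hsym hlow x x' hx hx'
end

section
/- Let 𝒦 ⊂ ℝ^d be a closed convex set and ψ : ℝ^d → ℝ a Lipschitz function. Then ∇ψ(x) ∈ 𝒦 for almost every x if and only if: for every c ∈ ℝ and x, x' ∈ ℝ^d such that (x' − x)·z ≥ c for all z ∈ 𝒦, one has ψ(x') − ψ(x) ≥ c. -/
/-!
If `∇ψ ∈ 𝒦` a.e., then by Fubini almost every line `t ↦ y + t • v` meets the good set in almost
every `t`; on such a line ψ is Lipschitz, hence absolutely continuous, and the fundamental theorem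
of calculus gives `c ≤ ψ (y + v) - ψ y`. This holds for a.e. `y`, hence for every `y` by continuity.
Conversely, if `∇ψ x ∉ 𝒦` at a point of differentiability, a closed half-space `{z | a ≤ ⟪w, z⟫}`
contains 𝒦 but not `∇ψ x`; the hypothesis gives `t * a ≤ ψ (x + t • w) - ψ x` for all `t > 0`,
so `a ≤ ⟪∇ψ x, w⟫`, a contradiction.
-/

open MeasureTheory Filter Set

theorem LipschitzWith.mul_sub_le_sub_of_ae_le_deriv {f : ℝ → ℝ} {K : NNReal}
    (hf : LipschitzWith K f) {a b c : ℝ} (hab : a ≤ b) (h : ∀ᵐ t, c ≤ deriv f t) :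
    c * (b - a) ≤ f b - f a := by
  have hac := (hf.lipschitzOnWith (s := uIcc a b)).absolutelyContinuousOnInterval
  calc c * (b - a) = ∫ _ in a..b, c := by simp [mul_comm]
    _ ≤ ∫ t in a..b, deriv f t :=
      intervalIntegral.integral_mono_ae_restrict hab intervalIntegrable_const
        hac.intervalIntegrable_deriv (ae_restrict_of_ae h)
    _ = f b - f a := hac.integral_deriv_eq_sub

section HaarLines

variable {E : Type*} [NormedAddCommGroup E] [NormedSpace ℝ E] [FiniteDimensional ℝ E]
  [MeasurableSpace E] [BorelSpace E] (μ : Measure E) [μ.IsAddHaarMeasure]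

theorem ae_ae_add_smul (v : E) {p : E → Prop} (h : ∀ᵐ x ∂μ, p x) :
    ∀ᵐ x ∂μ, ∀ᵐ t : ℝ, p (x + t • v) := by
  obtain ⟨s, hs, hs_meas, hsp⟩ := h.exists_measurable_mem
  have hlines := (ae_ae_add_linearMap_mem_iff (LinearMap.toSpanSingleton ℝ E v) volume μ hs_meas).2 hs
  filter_upwards [hlines] with x hx
  filter_upwards [hx] with t ht using hsp _ ht

variable {μ}

theorem LipschitzWith.le_sub_of_ae_le_fderiv {ψ : E → ℝ} {L : NNReal} (hψ : LipschitzWith L ψ)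
    {c : ℝ} {v : E} (h : ∀ᵐ x ∂μ, c ≤ fderiv ℝ ψ x v) (x : E) : c ≤ ψ (x + v) - ψ x := by
  have hae : ∀ᵐ y ∂μ, c ≤ ψ (y + v) - ψ y := by
    filter_upwards [ae_ae_add_smul μ v (hψ.ae_differentiableAt.and h)] with y hy
    have hline : LipschitzWith _ fun t : ℝ => ψ (y + t • v) :=
      hψ.comp ((LipschitzWith.const y).add (ContinuousLinearMap.toSpanSingleton ℝ v).lipschitz)
    have hderiv : ∀ᵐ t : ℝ, c ≤ deriv (fun t : ℝ => ψ (y + t • v)) t := by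
      filter_upwards [hy] with t ⟨hdiff, hc⟩
      have hmove : HasDerivAt (fun t : ℝ => y + t • v) v t := by
        simpa using ((hasDerivAt_id t).smul_const v).const_add y
      have hline_deriv : HasDerivAt (fun t : ℝ => ψ (y + t • v)) (fderiv ℝ ψ (y + t • v) v) t :=
        hdiff.hasFDerivAt.comp_hasDerivAt t hmove
      rwa [hline_deriv.deriv]
    simpa using hline.mul_sub_le_sub_of_ae_le_deriv zero_le_one hderiv
  have hclosed : IsClosed {y | c ≤ ψ (y + v) - ψ y} :=
    have := hψ.continuous
    isClosed_le continuous_const (by fun_prop)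
  have hall := (Measure.dense_of_ae hae).closure_eq
  rw [hclosed.closure_eq] at hall
  exact eq_univ_iff_forall.1 hall x

end HaarLines

theorem HasLineDerivAt.le_of_forall_mul_le_sub {E : Type*} [AddCommGroup E] [Module ℝ E]
    {f : E → ℝ} {f' a : ℝ} {x v : E} (hf : HasLineDerivAt ℝ f f' x v)
    (h : ∀ t > 0, t * a ≤ f (x + t • v) - f x) : a ≤ f' :=
  ge_of_tendsto hf.tendsto_slope_zero_right <| eventually_nhdsWithin_of_forall fun t ht => by
    rw [smul_eq_mul, le_inv_mul_iff₀ ht]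
    exact h t ht

theorem geometric_hahn_banach_closed_point_inner {E : Type*} [NormedAddCommGroup E]
    [InnerProductSpace ℝ E] [CompleteSpace E] {K : Set E} (hconv : Convex ℝ K) (hcl : IsClosed K)
    {y : E} (hy : y ∉ K) : ∃ w : E, ∃ a : ℝ, (∀ z ∈ K, a ≤ inner ℝ w z) ∧ inner ℝ w y < a := by
  obtain ⟨φ, u, hK, hy⟩ := geometric_hahn_banach_closed_point hconv hcl hy
  refine ⟨-(InnerProductSpace.toDual ℝ E).symm φ, -u, fun z hz => ?_, ?_⟩ <;>
    simp only [inner_neg_left, InnerProductSpace.toDual_symm_apply, neg_le_neg_iff, neg_lt_neg_iff]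
  exacts [(hK z hz).le, hy]

/-- Non-differential characterization of a Lipschitz function having its
(almost everywhere defined) gradient in a closed convex set 𝒦 ⊂ ℝ^d. -/
theorem gradient_in_convex_set_iff (d : ℕ) (K : Set (EuclideanSpace ℝ (Fin d)))
    (hcl : IsClosed K) (hconv : Convex ℝ K)
    (ψ : EuclideanSpace ℝ (Fin d) → ℝ) (L : NNReal) (hψ : LipschitzWith L ψ) :
    (∀ᵐ x ∂(volume : Measure (EuclideanSpace ℝ (Fin d))),
        DifferentiableAt ℝ ψ x ∧ gradient ψ x ∈ K) ↔
      (∀ (c : ℝ) (x x' : EuclideanSpace ℝ (Fin d)),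
        (∀ z ∈ K, c ≤ (inner ℝ (x' - x) z : ℝ)) → c ≤ ψ x' - ψ x) := by
  constructor
  · intro H c x x' hK
    have hgrad : ∀ᵐ y ∂volume, c ≤ fderiv ℝ ψ y (x' - x) := by
      filter_upwards [H] with y ⟨_, hy⟩
      rw [← inner_gradient_left, real_inner_comm]
      exact hK _ hy
    simpa using hψ.le_sub_of_ae_le_fderiv hgrad x
  · intro H
    filter_upwards [hψ.ae_differentiableAt] with x hx
    refine ⟨hx, ?_⟩
    by_contra hxK
    obtain ⟨w, a, hKw, hw⟩ := geometric_hahn_banach_closed_point_inner hconv hcl hxK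
    have hslope : a ≤ fderiv ℝ ψ x w :=
      (hx.hasFDerivAt.hasLineDerivAt w).le_of_forall_mul_le_sub fun t ht =>
        H _ x _ fun z hz => by
          rw [add_sub_cancel_left, real_inner_smul_left]
          exact mul_le_mul_of_nonneg_left (hKw z hz) ht.le
    rw [← inner_gradient_left, real_inner_comm] at hslope
    linarith
end

section
/- Let G ∈ ℝ^{d×d} be symmetric non-negative definite with strictly positive entries, and define ‖x‖_G = √(Gx·x). Then for every z ∈ 𝒞 = {Gx : x ∈ ℝ_{≥0}^d}, one has 𝖢(z) = sup_{y ∈ ℝ_{≥0}^d} { y·z − ‖y‖_G²/2 }, where 𝖢(Gx) = ‖x‖_G²/2; moreover the supremum is attained at any x ∈ ℝ_{≥0}^d with z = Gx. -/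
/-! Expanding `0 ≤ ‖x - y‖_G²` gives the Fenchel–Young inequality
`y·Gx - ‖y‖_G²/2 ≤ ‖x‖_G²/2`, with equality at `y = x`. -/

open Matrix

section QuadraticForm

variable {ι 𝕜 : Type*} [Fintype ι]

theorem Matrix.IsSymm.dotProduct_mulVec_comm [CommRing 𝕜] {G : Matrix ι ι 𝕜} (hG : G.IsSymm)
    (x y : ι → 𝕜) : y ⬝ᵥ G *ᵥ x = G *ᵥ y ⬝ᵥ x := by
  rw [dotProduct_mulVec, ← vecMul_transpose, hG.eq]

theorem Matrix.IsSymm.mulVec_sub_dotProduct_sub [CommRing 𝕜] {G : Matrix ι ι 𝕜} (hG : G.IsSymm)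
    (x y : ι → 𝕜) :
    G *ᵥ (x - y) ⬝ᵥ (x - y) = G *ᵥ x ⬝ᵥ x - 2 * (y ⬝ᵥ G *ᵥ x) + G *ᵥ y ⬝ᵥ y := by
  rw [mulVec_sub, sub_dotProduct, dotProduct_sub, dotProduct_sub,
    ← hG.dotProduct_mulVec_comm x y, dotProduct_comm (G *ᵥ x) y]
  ring

theorem Matrix.IsSymm.dotProduct_mulVec_sub_half_le [Field 𝕜] [LinearOrder 𝕜]
    [IsStrictOrderedRing 𝕜] {G : Matrix ι ι 𝕜} (hG : G.IsSymm)
    (hpsd : ∀ v : ι → 𝕜, 0 ≤ G *ᵥ v ⬝ᵥ v) (x y : ι → 𝕜) :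
    y ⬝ᵥ G *ᵥ x - G *ᵥ y ⬝ᵥ y / 2 ≤ G *ᵥ x ⬝ᵥ x / 2 := by
  have h := hpsd (x - y)
  rw [hG.mulVec_sub_dotProduct_sub] at h
  linarith

end QuadraticForm

theorem hopflax_convex_dual_general (d : ℕ) (G : Matrix (Fin d) (Fin d) ℝ)
    (hsym : G.IsSymm)
    (hpsd : ∀ y : Fin d → ℝ, 0 ≤ ∑ i, G.mulVec y i * y i)
    (x : Fin d → ℝ) (hx : ∀ i, 0 ≤ x i) :
    IsGreatest
      {r : ℝ | ∃ y : Fin d → ℝ, (∀ i, 0 ≤ y i) ∧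
        r = (∑ i, y i * G.mulVec x i) - (∑ i, G.mulVec y i * y i) / 2}
      ((∑ i, G.mulVec x i * x i) / 2) ∧
    (∑ i, x i * G.mulVec x i) - (∑ i, G.mulVec x i * x i) / 2 =
      (∑ i, G.mulVec x i * x i) / 2 := by
  have hattained : x ⬝ᵥ G *ᵥ x - G *ᵥ x ⬝ᵥ x / 2 = G *ᵥ x ⬝ᵥ x / 2 := by
    rw [dotProduct_comm]
    ring
  refine ⟨⟨⟨x, hx, hattained.symm⟩, ?_⟩, hattained⟩
  rintro r ⟨y, -, rfl⟩
  exact hsym.dotProduct_mulVec_sub_half_le hpsd x y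

/-- Convex duality for the non-linearity 𝖢(Gx) = ‖x‖_G²/2: for every z = Gx in the cone
𝒞 = {Gx : x ∈ ℝ_{≥0}^d}, one has 𝖢(z) = sup_{y ≥ 0} { y·z − ‖y‖_G²/2 }, with the
supremum attained (in particular at any x ≥ 0 with z = Gx). -/
theorem hopflax_convex_dual (d : ℕ) (G : Matrix (Fin d) (Fin d) ℝ)
    (hsym : G.IsSymm)
    (hpsd : ∀ y : Fin d → ℝ, 0 ≤ ∑ i, G.mulVec y i * y i)
    (hpos : ∀ k k', 0 < G k k')
    (x : Fin d → ℝ) (hx : ∀ i, 0 ≤ x i) :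
    IsGreatest
      {r : ℝ | ∃ y : Fin d → ℝ, (∀ i, 0 ≤ y i) ∧
        r = (∑ i, y i * G.mulVec x i) - (∑ i, G.mulVec y i * y i) / 2}
      ((∑ i, G.mulVec x i * x i) / 2) ∧
    (∑ i, x i * G.mulVec x i) - (∑ i, G.mulVec x i * x i) / 2 =
      (∑ i, G.mulVec x i * x i) / 2 :=
  hopflax_convex_dual_general d G hsym hpsd x hx
end

section
/- Let G ∈ ℝ^{d×d} be symmetric non-negative definite with entries ≥ m/d² > 0, and ψ : ℝ_{≥0}^d → ℝ Lipschitz in the normalized ℓ^1 norm. Then the Hopf-Lax function f_HL(t,x) = sup_{y ∈ ℝ_{≥0}^d} { ψ(x+y) − ‖y‖_G²/(2t) } satisfies the semigroup property: for all t > s > 0 and x ∈ ℝ_{≥0}^d, f_HL(t,x) = sup_{y ∈ ℝ_{≥0}^d} { f_HL(s, x+y) − ‖y‖_G²/(2(t−s)) }. -/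
/-!
The quadratic cost `Q y = ‖y‖_G²` satisfies the inf-convolution inequality
`Q (y + z) / (2t) ≤ Q y / (2(t - s)) + Q z / (2s)` (positive semidefiniteness applied to
`s • y - (t - s) • z`), with equality when `y` and `z` are the multiples `((t - s)/t) • w` and
`(s/t) • w` of `w = y + z`. The inequality gives `≥` in the semigroup identity, the equality case
gives `≤`. All suprema involved are finite: Young's inequality lets the coercivity
`‖y‖_G² ≥ m ‖y‖₁²` absorb the Lipschitz growth of `ψ`, so `ψ (x + y) - Q y / (2t) ≤ ψ x + K t`.
-/

/-- The normalized ℓ^1 norm on ℝ^d: ‖x‖_1 = (1/d)∑_k |x_k|. -/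
noncomputable def norm1 (d : ℕ) (x : Fin d → ℝ) : ℝ := (1 / (d : ℝ)) * ∑ k, |x k|

/-- The Hopf-Lax function f_HL(t,x) = sup_{y ≥ 0} { ψ(x+y) − ‖y‖_G²/(2t) }. -/
noncomputable def fHL (d : ℕ) (G : Matrix (Fin d) (Fin d) ℝ) (ψ : (Fin d → ℝ) → ℝ)
    (t : ℝ) (x : Fin d → ℝ) : ℝ :=
  sSup {r : ℝ | ∃ y : Fin d → ℝ, (∀ i, 0 ≤ y i) ∧
    r = ψ (x + y) - (∑ i, G.mulVec y i * y i) / (2 * t)}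

open Matrix

section HopfLax

variable {V : Type*} [AddCommMonoid V] [Module ℝ V]

/-- `fHL d G ψ` is, definitionally, `hopfLax` on the nonnegative orthant with
`Q y = G *ᵥ y ⬝ᵥ y`. -/
noncomputable def hopfLax (C : PointedCone ℝ V) (Q ψ : V → ℝ) (t : ℝ) (x : V) : ℝ :=
  sSup {r : ℝ | ∃ y ∈ C, r = ψ (x + y) - Q y / (2 * t)}

variable {C : PointedCone ℝ V} {Q ψ : V → ℝ} {t c : ℝ} {x y : V}

theorem hopfLax_le (h : ∀ y ∈ C, ψ (x + y) - Q y / (2 * t) ≤ c) : hopfLax C Q ψ t x ≤ c :=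
  csSup_le ⟨_, 0, C.zero_mem, rfl⟩ fun _ ⟨y, hy, hr⟩ => hr ▸ h y hy

theorem le_hopfLax (h : ∀ y ∈ C, ψ (x + y) - Q y / (2 * t) ≤ c) (hy : y ∈ C) :
    ψ (x + y) - Q y / (2 * t) ≤ hopfLax C Q ψ t x :=
  le_csSup ⟨c, fun _ ⟨y, hy, hr⟩ => hr ▸ h y hy⟩ ⟨y, hy, rfl⟩

theorem hopfLax_hopfLax {K s : ℝ}
    (hgrowth : ∀ t, 0 < t → ∀ x ∈ C, ∀ y ∈ C, ψ (x + y) - Q y / (2 * t) ≤ ψ x + K * t)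
    (hQ_smul : ∀ (c : ℝ) w, Q (c • w) = c ^ 2 * Q w)
    (hQ_add : ∀ a b, 0 < a → 0 < b → ∀ y z, Q (y + z) / (a + b) ≤ Q y / a + Q z / b)
    (hs : 0 < s) (hst : s < t) (hx : x ∈ C) :
    hopfLax C Q (hopfLax C Q ψ s) (t - s) x = hopfLax C Q ψ t x := by
  have hts : 0 < t - s := sub_pos.mpr hst
  have ht : 0 < t := hs.trans hst
  have hbound : ∀ y ∈ C, hopfLax C Q ψ s (x + y) - Q y / (2 * (t - s)) ≤ ψ x + K * t := by
    intro y hy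
    have h₁ := hopfLax_le (hgrowth s hs (x + y) (C.add_mem hx hy))
    have h₂ := hgrowth (t - s) hts x hx y hy
    linarith
  refine le_antisymm (hopfLax_le fun y hy => ?_) (hopfLax_le fun w hw => ?_)
  · suffices hopfLax C Q ψ s (x + y) ≤ hopfLax C Q ψ t x + Q y / (2 * (t - s)) by linarith
    refine hopfLax_le fun z hz => ?_
    have h₁ := le_hopfLax (hgrowth t ht x hx) (C.add_mem hy hz)
    have h₂ := hQ_add (2 * (t - s)) (2 * s) (by positivity) (by positivity) y z
    rw [show 2 * (t - s) + 2 * s = 2 * t by ring] at h₂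
    rw [add_assoc]
    linarith
  · set y := ((t - s) / t) • w
    set z := (s / t) • w
    have hy : y ∈ C := C.smul_mem (div_pos hts ht).le hw
    have hz : z ∈ C := C.smul_mem (div_pos hs ht).le hw
    have hyz : x + w = x + y + z := by
      rw [add_assoc, ← add_smul, show (t - s) / t + s / t = 1 by field_simp; ring, one_smul]
    have hsplit : Q w / (2 * t) = Q y / (2 * (t - s)) + Q z / (2 * s) := by
      rw [hQ_smul, hQ_smul]
      field_simp
      ring
    have h₁ := le_hopfLax (hgrowth s hs (x + y) (C.add_mem hx hy)) hz
    have h₂ := le_hopfLax hbound hy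
    rw [hyz, hsplit]
    linarith

end HopfLax

theorem LinearMap.BilinForm.apply_add_div_add_le {V : Type*} [AddCommGroup V] [Module ℝ V]
    {B : LinearMap.BilinForm ℝ V} (hB : ∀ v, 0 ≤ B v v) {a b : ℝ} (ha : 0 < a) (hb : 0 < b)
    (y z : V) : B (y + z) (y + z) / (a + b) ≤ B y y / a + B z z / b := by
  have h := hB (b • y - a • z)
  simp only [map_sub, map_smul, LinearMap.sub_apply, LinearMap.smul_apply, smul_eq_mul] at h
  simp only [map_add, LinearMap.add_apply]
  rw [div_add_div _ _ ha.ne' hb.ne', div_le_div_iff₀ (by positivity) (by positivity)]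
  nlinarith

theorem Matrix.mulVec_dotProduct_add_div_add_le {ι : Type*} [Fintype ι] {G : Matrix ι ι ℝ}
    (hG : ∀ y, 0 ≤ G *ᵥ y ⬝ᵥ y) {a b : ℝ} (ha : 0 < a) (hb : 0 < b) (y z : ι → ℝ) :
    G *ᵥ (y + z) ⬝ᵥ (y + z) / (a + b) ≤ G *ᵥ y ⬝ᵥ y / a + G *ᵥ z ⬝ᵥ z / b := by
  classical
  have hB : ∀ v, 0 ≤ Matrix.toBilin' G v v := fun v => by
    rw [Matrix.toBilin'_apply', dotProduct_comm]
    exact hG v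
  simpa only [Matrix.toBilin'_apply', dotProduct_comm _ (G *ᵥ _)] using
    LinearMap.BilinForm.apply_add_div_add_le hB ha hb y z

theorem Matrix.mulVec_smul_dotProduct_smul {ι : Type*} [Fintype ι] (G : Matrix ι ι ℝ) (c : ℝ)
    (w : ι → ℝ) : G *ᵥ (c • w) ⬝ᵥ (c • w) = c ^ 2 * (G *ᵥ w ⬝ᵥ w) := by
  rw [mulVec_smul, smul_dotProduct, dotProduct_smul, smul_eq_mul, smul_eq_mul]
  ring

theorem Matrix.mul_sum_sq_le_mulVec_dotProduct {ι : Type*} [Fintype ι] {G : Matrix ι ι ℝ}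
    {c : ℝ} (hG : ∀ i j, c ≤ G i j) {y : ι → ℝ} (hy : ∀ i, 0 ≤ y i) :
    c * (∑ i, y i) ^ 2 ≤ G *ᵥ y ⬝ᵥ y :=
  calc c * (∑ i, y i) ^ 2 = ∑ i, (∑ j, c * y j) * y i := by
        simp only [sq, Finset.mul_sum, Finset.sum_mul]
        exact Finset.sum_congr rfl fun i _ => Finset.sum_congr rfl fun j _ => by ring
    _ ≤ ∑ i, (∑ j, G i j * y j) * y i := by
        gcongr with i _ j _
        · exact hy i
        · exact hy j
        · exact hG i j

theorem mul_norm1_sq_le {d : ℕ} {m : ℝ} {G : Matrix (Fin d) (Fin d) ℝ}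
    (hG : ∀ k k', m / (d : ℝ) ^ 2 ≤ G k k') {y : Fin d → ℝ} (hy : ∀ i, 0 ≤ y i) :
    m * norm1 d y ^ 2 ≤ G *ᵥ y ⬝ᵥ y := by
  have h := Matrix.mul_sum_sq_le_mulVec_dotProduct hG hy
  simp only [norm1, abs_of_nonneg (hy _)]
  convert h using 1
  ring

theorem sub_div_le_of_le_add_mul {a b u q L m t : ℝ} (hm : 0 < m) (ht : 0 < t)
    (hab : a ≤ b + L * u) (hq : m * u ^ 2 ≤ q) : a - q / (2 * t) ≤ b + L ^ 2 / (2 * m) * t := by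
  have hq' : m * u ^ 2 / (2 * t) ≤ q / (2 * t) := by gcongr
  have young : L * u ≤ m * u ^ 2 / (2 * t) + L ^ 2 / (2 * m) * t := by
    rw [div_mul_eq_mul_div, div_add_div _ _ (by positivity) (by positivity),
      le_div_iff₀ (by positivity)]
    nlinarith [sq_nonneg (m * u - L * t)]
  linarith

theorem hopflax_semigroup_general (d : ℕ) (m : ℝ) (hm : 0 < m)
    (G : Matrix (Fin d) (Fin d) ℝ)
    (hpsd : ∀ y : Fin d → ℝ, 0 ≤ ∑ i, G.mulVec y i * y i)
    (hlow : ∀ k k', m / (d : ℝ) ^ 2 ≤ G k k')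
    (ψ : (Fin d → ℝ) → ℝ) (L : ℝ)
    (hψ : ∀ x x' : Fin d → ℝ, (∀ i, 0 ≤ x i) → (∀ i, 0 ≤ x' i) →
      |ψ x - ψ x'| ≤ L * norm1 d (x - x'))
    (s t : ℝ) (hs : 0 < s) (hst : s < t) (x : Fin d → ℝ) (hx : ∀ i, 0 ≤ x i) :
    fHL d G ψ t x =
      sSup {r : ℝ | ∃ y : Fin d → ℝ, (∀ i, 0 ≤ y i) ∧
        r = fHL d G ψ s (x + y) - (∑ i, G.mulVec y i * y i) / (2 * (t - s))} := by
  have hgrowth : ∀ τ, 0 < τ → ∀ u ∈ PointedCone.positive ℝ (Fin d → ℝ),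
      ∀ v ∈ PointedCone.positive ℝ _,
        ψ (u + v) - G *ᵥ v ⬝ᵥ v / (2 * τ) ≤ ψ u + L ^ 2 / (2 * m) * τ := by
    intro τ hτ u hu v hv
    have hlip := hψ (u + v) u (fun i => add_nonneg (hu i) (hv i)) hu
    rw [add_sub_cancel_left] at hlip
    exact sub_div_le_of_le_add_mul hm hτ (by linarith [le_abs_self (ψ (u + v) - ψ u)])
      (mul_norm1_sq_le hlow hv)
  exact (hopfLax_hopfLax hgrowth G.mulVec_smul_dotProduct_smul
    (fun _ _ ha hb => Matrix.mulVec_dotProduct_add_div_add_le hpsd ha hb) hs hst hx).symm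

/-- Semigroup property of the Hopf-Lax function: for t > s > 0 and x ≥ 0,
f_HL(t,x) = sup_{y ≥ 0} { f_HL(s,x+y) − ‖y‖_G²/(2(t−s)) }. -/
theorem hopflax_semigroup (d : ℕ) (hd : 0 < d) (m : ℝ) (hm : 0 < m)
    (G : Matrix (Fin d) (Fin d) ℝ) (hsym : G.IsSymm)
    (hpsd : ∀ y : Fin d → ℝ, 0 ≤ ∑ i, G.mulVec y i * y i)
    (hlow : ∀ k k', m / (d : ℝ) ^ 2 ≤ G k k')
    (ψ : (Fin d → ℝ) → ℝ) (L : ℝ) (hL : 0 ≤ L)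
    (hψ : ∀ x x' : Fin d → ℝ, (∀ i, 0 ≤ x i) → (∀ i, 0 ≤ x' i) →
      |ψ x - ψ x'| ≤ L * norm1 d (x - x'))
    (s t : ℝ) (hs : 0 < s) (hst : s < t) (x : Fin d → ℝ) (hx : ∀ i, 0 ≤ x i) :
    fHL d G ψ t x =
      sSup {r : ℝ | ∃ y : Fin d → ℝ, (∀ i, 0 ≤ y i) ∧
        r = fHL d G ψ s (x + y) - (∑ i, G.mulVec y i * y i) / (2 * (t - s))} :=
  hopflax_semigroup_general d m hm G hpsd hlow ψ L hψ s t hs hst x hx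
end

section
/- Let 𝒦' ⊂ ℝ^d be a closed convex set, and let 𝒜 = {(v,c) ∈ ℝ^d × ℝ : x·v ≥ c for all x ∈ 𝒦', and ‖v‖_1 = 1}. Suppose x ∈ ℝ^d and ε > 0 satisfy x·v ≥ c − ε for all (v,c) ∈ 𝒜. Then there exist y ∈ 𝒦' and z ∈ ℝ^d with x = y + z and ‖z‖_{1,*} ≤ ε. -/
/-!
Let `B` be the sup-norm ball of radius `ε / d`, the unit ball of `‖·‖_{1,*}` scaled by `ε`. If `x`
were not in the closed convex set `𝒦' + B`, a separating functional `w ↦ w ⬝ᵥ v` would give a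
half-space containing `𝒦'` whose bound `c` exceeds `x ⬝ᵥ v` by more than
`max_{z ∈ B} (-z ⬝ᵥ v) = ε ‖v‖_1`; normalising `v` contradicts the hypothesis.
-/

open Set Matrix Pointwise

theorem mem_add_of_forall_halfspace {E : Type*} [AddCommGroup E] [Module ℝ E]
    [TopologicalSpace E] [IsTopologicalAddGroup E] [ContinuousSMul ℝ E] [LocallyConvexSpace ℝ E]
    {K B : Set E} (hK : IsClosed K) (hKc : Convex ℝ K) (hB : IsCompact B) (hBc : Convex ℝ B)
    {x : E} (h : ∀ (f : StrongDual ℝ E) (c : ℝ), (∀ w ∈ K, c ≤ f w) → ∃ z ∈ B, c + f z ≤ f x) :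
    x ∈ K + B := by
  by_contra hx
  obtain ⟨f, u, hfx, hfKB⟩ :=
    geometric_hahn_banach_point_closed (hKc.add hBc) (hK.add_right_of_isCompact hB) hx
  have hBne : B.Nonempty :=
    let ⟨z, hz, _⟩ := h 0 0 fun _ _ => le_rfl
    ⟨z, hz⟩
  obtain ⟨z₀, hz₀, hmin⟩ := hB.exists_isMinOn hBne f.continuous.continuousOn
  obtain ⟨z, hz, hle⟩ := h f (u - f z₀) fun w hw => by
    have := hfKB (w + z₀) (add_mem_add hw hz₀)
    rw [map_add] at this
    linarith
  have : f z₀ ≤ f z := hmin hz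
  linarith

theorem LinearMap.exists_eq_dotProduct {ι : Type*} [Fintype ι] [DecidableEq ι]
    (f : (ι → ℝ) →ₗ[ℝ] ℝ) : ∃ v : ι → ℝ, ∀ w, f w = w ⬝ᵥ v :=
  ⟨fun i => f fun j => if i = j then 1 else 0, f.pi_apply_eq_sum_univ⟩

theorem exists_mem_closedBall_dotProduct_eq {ι : Type*} [Fintype ι] (v : ι → ℝ) {δ : ℝ}
    (hδ : 0 ≤ δ) : ∃ z ∈ Metric.closedBall (0 : ι → ℝ) δ, z ⬝ᵥ v = -(δ * ∑ k, |v k|) := by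
  refine ⟨fun k => -δ * SignType.sign (v k), ?_, ?_⟩
  · rw [mem_closedBall_zero_iff, pi_norm_le_iff_of_nonneg hδ]
    intro k
    rw [Real.norm_eq_abs, abs_mul, abs_neg, abs_of_nonneg hδ]
    exact mul_le_of_le_one_right hδ (by rcases SignType.sign (v k) with _ | _ | _ <;> simp)
  · simp only [dotProduct, mul_assoc, sign_mul_self, Finset.mul_sum, neg_mul, Finset.sum_neg_distrib]

theorem norm1_nonneg (d : ℕ) (v : Fin d → ℝ) : 0 ≤ norm1 d v := by
  unfold norm1; positivity

theorem norm1_smul (d : ℕ) (a : ℝ) (v : Fin d → ℝ) : norm1 d (a • v) = |a| * norm1 d v := by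
  simp only [norm1, Pi.smul_apply, smul_eq_mul, abs_mul, ← Finset.mul_sum]
  ring

theorem eq_zero_of_norm1_eq_zero {d : ℕ} {v : Fin d → ℝ} (h : norm1 d v = 0) : v = 0 := by
  rcases Nat.eq_zero_or_pos d with rfl | hd
  · exact Subsingleton.elim _ _
  have hsum : ∑ k, |v k| = 0 := by simpa [norm1, hd.ne'] using h
  ext k
  simpa using (Finset.sum_eq_zero_iff_of_nonneg fun k _ => abs_nonneg (v k)).1 hsum k
    (Finset.mem_univ k)

theorem le_dotProduct_add_mul_norm1 {d : ℕ} {K : Set (Fin d → ℝ)} (hK : K.Nonempty)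
    {x : Fin d → ℝ} {ε : ℝ}
    (hx : ∀ (v : Fin d → ℝ) (c : ℝ), norm1 d v = 1 → (∀ w ∈ K, c ≤ w ⬝ᵥ v) → c - ε ≤ x ⬝ᵥ v)
    (v : Fin d → ℝ) (c : ℝ) (hc : ∀ w ∈ K, c ≤ w ⬝ᵥ v) : c ≤ x ⬝ᵥ v + ε * norm1 d v := by
  rcases (norm1_nonneg d v).eq_or_lt with hN | hN
  · obtain rfl := eq_zero_of_norm1_eq_zero hN.symm
    obtain ⟨w, hw⟩ := hK
    simpa [norm1] using hc w hw
  set N := norm1 d v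
  have hunit : norm1 d (N⁻¹ • v) = 1 := by
    rw [norm1_smul, abs_of_pos (inv_pos.2 hN), inv_mul_cancel₀ hN.ne']
  have hscaled := hx (N⁻¹ • v) (N⁻¹ * c) hunit fun w hw => by
    rw [dotProduct_smul, smul_eq_mul]
    exact mul_le_mul_of_nonneg_left (hc w hw) (inv_nonneg.2 hN.le)
  rw [dotProduct_smul, smul_eq_mul] at hscaled
  have := mul_le_mul_of_nonneg_left hscaled hN.le
  rw [mul_sub, ← mul_assoc, ← mul_assoc, mul_inv_cancel₀ hN.ne', one_mul, one_mul] at this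
  linarith

theorem normStar_le_of_norm_le {d : ℕ} {z : Fin d → ℝ} {ε : ℝ} (hε : 0 ≤ ε)
    (hz : ‖z‖ ≤ ε / d) : normStar d z ≤ ε := by
  refine Real.iSup_le (fun k => ?_) hε
  rcases (Nat.cast_nonneg (α := ℝ) d).eq_or_lt with hd | hd
  · rw [← hd, zero_mul]
    exact hε
  · rw [← le_div_iff₀' hd]
    exact (norm_le_pi_norm z k).trans hz

/-- If x satisfies x·v ≥ c − ε for every half-space representation pair (v,c) of a
closed convex set 𝒦' (with ‖v‖_1 = 1), then x decomposes as x = y + z with y ∈ 𝒦'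
and ‖z‖_{1,*} ≤ ε. -/
theorem near_halfspaces_implies_near_set (d : ℕ) (K' : Set (Fin d → ℝ))
    (hcl : IsClosed K') (hconv : Convex ℝ K') (hne : K'.Nonempty)
    (x : Fin d → ℝ) (ε : ℝ) (hε : 0 < ε)
    (hx : ∀ (v : Fin d → ℝ) (c : ℝ), norm1 d v = 1 →
      (∀ w ∈ K', c ≤ ∑ i, w i * v i) → c - ε ≤ ∑ i, x i * v i) :
    ∃ y ∈ K', ∃ z : Fin d → ℝ, x = y + z ∧ normStar d z ≤ ε := by
  have hδ : 0 ≤ ε / d := by positivity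
  have hxKB : x ∈ K' + Metric.closedBall (0 : Fin d → ℝ) (ε / d) := by
    refine mem_add_of_forall_halfspace hcl hconv (isCompact_closedBall 0 _) (convex_closedBall 0 _)
      fun f c hc => ?_
    obtain ⟨v, hv⟩ := f.toLinearMap.exists_eq_dotProduct
    simp only [ContinuousLinearMap.coe_coe] at hv
    obtain ⟨z, hz, hzv⟩ := exists_mem_closedBall_dotProduct_eq v hδ
    have hcv := le_dotProduct_add_mul_norm1 hne hx v c fun w hw => hv w ▸ hc w hw
    refine ⟨z, hz, ?_⟩
    calc c + f z = c - ε * norm1 d v := by rw [hv, hzv, norm1]; ring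
      _ ≤ f x := by rw [hv]; linarith
  obtain ⟨y, hy, z, hz, rfl⟩ := hxKB
  exact ⟨y, hy, z, rfl, normStar_le_of_norm_le hε.le (mem_closedBall_zero_iff.1 hz)⟩
end
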